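/- arXiv:math/0408136 — 2 statements merged into one kernel-verified Lean document; each statement's English description precedes it below -/
import Mathlib

section
/- For distinct points p, q ∈ ℝ^{n+1}, the sections s_p(u) = p − ⟨p,u⟩u and s_q(u) = q − ⟨q,u⟩u of the tangent bundle of S^n agree at exactly the two points u = ±(p−q)/|p−q|. -/
open scoped RealInnerProductSpace

/-- For distinct `p, q ∈ ℝ^{n+1}`, the tangent vector fields `s_p(u) = p − ⟨p,u⟩u` and
`s_q(u) = q − ⟨q,u⟩u` of the unit sphere agree exactly at the two points
`u = ±(p−q)/‖p−q‖`. -/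
theorem stmt5 (n : ℕ) (p q : EuclideanSpace ℝ (Fin (n + 1))) (hpq : p ≠ q)
    (u : EuclideanSpace ℝ (Fin (n + 1))) (hu : ‖u‖ = 1) :
    p - ⟪p, u⟫ • u = q - ⟪q, u⟫ • u ↔
      (u = ‖p - q‖⁻¹ • (p - q) ∨ u = -(‖p - q‖⁻¹ • (p - q))) := by
  have hne : p - q ≠ 0 := sub_ne_zero.mpr hpq
  have hnorm : ‖p - q‖ ≠ 0 := norm_ne_zero_iff.mpr hne
  have key : (p - ⟪p, u⟫ • u = q - ⟪q, u⟫ • u) ↔ p - q = ⟪p - q, u⟫ • u := by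
    rw [← sub_eq_zero, show p - ⟪p, u⟫ • u - (q - ⟪q, u⟫ • u)
        = (p - q) - ⟪p - q, u⟫ • u by rw [inner_sub_left, sub_smul]; abel,
      sub_eq_zero]
  rw [key]
  constructor
  · intro h
    set c : ℝ := ⟪p - q, u⟫ with hc
    have hcn : ‖p - q‖ = |c| := by rw [h, norm_smul, hu, mul_one]; rfl
    have hc0 : c ≠ 0 := fun h0 => hnorm (by rw [hcn, h0, abs_zero])
    have hu' : u = c⁻¹ • (p - q) := by
      rw [h, smul_smul, inv_mul_cancel₀ hc0, one_smul]
    rcases abs_cases c with ⟨h1, _⟩ | ⟨h1, _⟩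
    · left; rw [hu', hcn, h1]
    · right; rw [hu', hcn, h1, ← neg_smul, neg_inv, neg_neg]
  · have hone : ‖p - q‖⁻¹ * (‖p - q‖ * ‖p - q‖) * ‖p - q‖⁻¹ = 1 := by field_simp
    rintro (h | h) <;> subst h
    · rw [real_inner_smul_right, real_inner_self_eq_norm_mul_norm, smul_smul, hone, one_smul]
    · rw [inner_neg_right, real_inner_smul_right, real_inner_self_eq_norm_mul_norm,
        smul_neg, neg_smul, neg_neg, smul_smul, hone, one_smul]
end

section
/- For each u ∈ S^6 ⊂ ℝ^7, the map J_u : T_uS^6 → T_uS^6 given by J_u(v) = u × v (seven-dimensional cross product) is well-defined (since u×v ⟂ u) and satisfies J_u² = −Id, so it defines an almost complex structure on S^6. -/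
open scoped RealInnerProductSpace

/-- Structure constants of the standard `G₂` 3-form
`φ = dx₁₂₃ + dx₁∧(dx₄₅+dx₆₇) + dx₂∧(dx₄₆−dx₅₇) − dx₃∧(dx₄₇+dx₅₆)` on `ℝ⁷`
(indices shifted to `0,…,6`), totally antisymmetrised. -/
def g2phi (i j k : Fin 7) : ℝ :=
  let f : Fin 7 × Fin 7 × Fin 7 → ℝ := fun t =>
    if t ∈ ([(0, 1, 2), (0, 3, 4), (0, 5, 6), (1, 3, 5)] : List (Fin 7 × Fin 7 × Fin 7))
      then 1
    else if t ∈ ([(1, 4, 6), (2, 3, 6), (2, 4, 5)] : List (Fin 7 × Fin 7 × Fin 7))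
      then -1
    else 0
  f (i, j, k) + f (j, k, i) + f (k, i, j) - f (i, k, j) - f (j, i, k) - f (k, j, i)

/-- The seven-dimensional cross product on `ℝ⁷`, defined by `⟨X × Y, Z⟩ = φ(X,Y,Z)`
for the standard `G₂` 3-form `φ` (equivalently, the cross product induced by octonion
multiplication on the imaginary octonions). -/
noncomputable def cross7 (X Y : EuclideanSpace ℝ (Fin 7)) : EuclideanSpace ℝ (Fin 7) :=
  WithLp.toLp 2 (fun k => ∑ i, ∑ j, g2phi i j k * X i * Y j)

set_option maxHeartbeats 1000000 in
lemma cross7_c0 (X Y : EuclideanSpace ℝ (Fin 7)) :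
    cross7 X Y 0 = X 1 * Y 2 - X 2 * Y 1 + X 3 * Y 4 - X 4 * Y 3 + X 5 * Y 6 - X 6 * Y 5 := by
  simp only [cross7, PiLp.toLp_apply]
  rw [Fin.sum_univ_seven]
  simp (config := { decide := true }) only [Fin.sum_univ_seven, g2phi,
    List.mem_cons, List.not_mem_nil, Prod.mk.injEq, if_true, if_false]
  ring

set_option maxHeartbeats 1000000 in
lemma cross7_c1 (X Y : EuclideanSpace ℝ (Fin 7)) :
    cross7 X Y 1 = -(X 0 * Y 2) + X 2 * Y 0 + X 3 * Y 5 - X 4 * Y 6 - X 5 * Y 3 + X 6 * Y 4 := by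
  simp only [cross7, PiLp.toLp_apply]
  rw [Fin.sum_univ_seven]
  simp (config := { decide := true }) only [Fin.sum_univ_seven, g2phi,
    List.mem_cons, List.not_mem_nil, Prod.mk.injEq, if_true, if_false]
  ring

set_option maxHeartbeats 1000000 in
lemma cross7_c2 (X Y : EuclideanSpace ℝ (Fin 7)) :
    cross7 X Y 2 = X 0 * Y 1 - X 1 * Y 0 - X 3 * Y 6 - X 4 * Y 5 + X 5 * Y 4 + X 6 * Y 3 := by
  simp only [cross7, PiLp.toLp_apply]
  rw [Fin.sum_univ_seven]
  simp (config := { decide := true }) only [Fin.sum_univ_seven, g2phi,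
    List.mem_cons, List.not_mem_nil, Prod.mk.injEq, if_true, if_false]
  ring

set_option maxHeartbeats 1000000 in
lemma cross7_c3 (X Y : EuclideanSpace ℝ (Fin 7)) :
    cross7 X Y 3 = -(X 0 * Y 4) - X 1 * Y 5 + X 2 * Y 6 + X 4 * Y 0 + X 5 * Y 1 - X 6 * Y 2 := by
  simp only [cross7, PiLp.toLp_apply]
  rw [Fin.sum_univ_seven]
  simp (config := { decide := true }) only [Fin.sum_univ_seven, g2phi,
    List.mem_cons, List.not_mem_nil, Prod.mk.injEq, if_true, if_false]
  ring

set_option maxHeartbeats 1000000 in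
lemma cross7_c4 (X Y : EuclideanSpace ℝ (Fin 7)) :
    cross7 X Y 4 = X 0 * Y 3 + X 1 * Y 6 + X 2 * Y 5 - X 3 * Y 0 - X 5 * Y 2 - X 6 * Y 1 := by
  simp only [cross7, PiLp.toLp_apply]
  rw [Fin.sum_univ_seven]
  simp (config := { decide := true }) only [Fin.sum_univ_seven, g2phi,
    List.mem_cons, List.not_mem_nil, Prod.mk.injEq, if_true, if_false]
  ring

set_option maxHeartbeats 1000000 in
lemma cross7_c5 (X Y : EuclideanSpace ℝ (Fin 7)) :
    cross7 X Y 5 = -(X 0 * Y 6) + X 1 * Y 3 - X 2 * Y 4 - X 3 * Y 1 + X 4 * Y 2 + X 6 * Y 0 := by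
  simp only [cross7, PiLp.toLp_apply]
  rw [Fin.sum_univ_seven]
  simp (config := { decide := true }) only [Fin.sum_univ_seven, g2phi,
    List.mem_cons, List.not_mem_nil, Prod.mk.injEq, if_true, if_false]
  ring

set_option maxHeartbeats 1000000 in
lemma cross7_c6 (X Y : EuclideanSpace ℝ (Fin 7)) :
    cross7 X Y 6 = X 0 * Y 5 - X 1 * Y 4 - X 2 * Y 3 + X 3 * Y 2 + X 4 * Y 1 - X 5 * Y 0 := by
  simp only [cross7, PiLp.toLp_apply]
  rw [Fin.sum_univ_seven]
  simp (config := { decide := true }) only [Fin.sum_univ_seven, g2phi,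
    List.mem_cons, List.not_mem_nil, Prod.mk.injEq, if_true, if_false]
  ring

/-- For `u ∈ S⁶`, the map `v ↦ u × v` preserves the tangent space `T_u S⁶`
(`u × v ⟂ u`) and squares to `−Id` there, so it is an almost complex structure on `S⁶`. -/
theorem stmt13 (u v : EuclideanSpace ℝ (Fin 7)) (hu : ‖u‖ = 1) (huv : ⟪u, v⟫ = 0) :
    ⟪u, cross7 u v⟫ = 0 ∧ cross7 u (cross7 u v) = -v := by
  have hu' : u 0 * u 0 + u 1 * u 1 + u 2 * u 2 + u 3 * u 3 + u 4 * u 4 + u 5 * u 5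
      + u 6 * u 6 = 1 := by
    have h := real_inner_self_eq_norm_sq u
    rw [hu] at h
    simp only [PiLp.inner_apply, RCLike.inner_apply, conj_trivial, Fin.sum_univ_seven] at h
    linarith
  have huv' : u 0 * v 0 + u 1 * v 1 + u 2 * v 2 + u 3 * v 3 + u 4 * v 4 + u 5 * v 5
      + u 6 * v 6 = 0 := by
    simp only [PiLp.inner_apply, RCLike.inner_apply, conj_trivial, Fin.sum_univ_seven] at huv
    linarith
  constructor
  · simp only [PiLp.inner_apply, RCLike.inner_apply, conj_trivial, Fin.sum_univ_seven,
      cross7_c0, cross7_c1, cross7_c2, cross7_c3, cross7_c4, cross7_c5, cross7_c6]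
    ring
  · ext k
    fin_cases k
    · show cross7 u (cross7 u v) 0 = -(v 0)
      simp only [cross7_c0, cross7_c1, cross7_c2, cross7_c3, cross7_c4, cross7_c5, cross7_c6]
      linear_combination u 0 * huv' - v 0 * hu'
    · show cross7 u (cross7 u v) 1 = -(v 1)
      simp only [cross7_c0, cross7_c1, cross7_c2, cross7_c3, cross7_c4, cross7_c5, cross7_c6]
      linear_combination u 1 * huv' - v 1 * hu'
    · show cross7 u (cross7 u v) 2 = -(v 2)
      simp only [cross7_c0, cross7_c1, cross7_c2, cross7_c3, cross7_c4, cross7_c5, cross7_c6]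
      linear_combination u 2 * huv' - v 2 * hu'
    · show cross7 u (cross7 u v) 3 = -(v 3)
      simp only [cross7_c0, cross7_c1, cross7_c2, cross7_c3, cross7_c4, cross7_c5, cross7_c6]
      linear_combination u 3 * huv' - v 3 * hu'
    · show cross7 u (cross7 u v) 4 = -(v 4)
      simp only [cross7_c0, cross7_c1, cross7_c2, cross7_c3, cross7_c4, cross7_c5, cross7_c6]
      linear_combination u 4 * huv' - v 4 * hu'
    · show cross7 u (cross7 u v) 5 = -(v 5)
      simp only [cross7_c0, cross7_c1, cross7_c2, cross7_c3, cross7_c4, cross7_c5, cross7_c6]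
      linear_combination u 5 * huv' - v 5 * hu'
    · show cross7 u (cross7 u v) 6 = -(v 6)
      simp only [cross7_c0, cross7_c1, cross7_c2, cross7_c3, cross7_c4, cross7_c5, cross7_c6]
      linear_combination u 6 * huv' - v 6 * hu'
end
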